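/- Let G be a group with centre Z, let m ≥ 1, and let θ be an automorphism of G with θ^m = id. Define S_θ = {s ∈ G : s·θ(s)·θ^2(s)⋯θ^{m−1}(s) ∈ Z}. Define an equivalence relation on S_θ by: s ≈ s' iff there exist z ∈ Z and g ∈ G with s' = z·g^{-1}·s·θ(g). Let A = {φ ∈ Aut(G) : φ^m = id and φ∘θ^{-1} is an inner automorphism of G}, with equivalence relation φ ~ φ' iff there exists g ∈ G with φ' = Int_g ∘ φ ∘ Int_g^{-1}. Then the assignment s ↦ Int_s ∘ θ maps S_θ into A and induces a well-defined bijection S_θ/≈ → A/~. -/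
import Mathlib

lemma aut_mul_conj {G : Type*} [Group G] (f : MulAut G) (a : G) :
    f * MulAut.conj a = MulAut.conj (f a) * f := by
  ext x
  simp [MulAut.conj, mul_assoc]

lemma conj_eq_one_iff' {G : Type*} [Group G] (a : G) :
    MulAut.conj a = 1 ↔ a ∈ Subgroup.center G := by
  rw [Subgroup.mem_center_iff]
  constructor
  · intro h g
    have := DFunLike.congr_fun h g
    simp [MulAut.conj, mul_inv_eq_iff_eq_mul] at this
    exact this.symm
  · intro h
    ext x
    show a * x * a⁻¹ = x
    rw [← h x]
    simp

lemma pow_conj_mul {G : Type*} [Group G] (θ : MulAut G) (s : G) (n : ℕ) :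
    (MulAut.conj s * θ) ^ n
      = MulAut.conj (((List.range n).map (fun i => (θ ^ i) s)).prod) * θ ^ n := by
  induction n with
  | zero => simp
  | succ n ih =>
      rw [pow_succ, ih, List.range_succ, List.map_append, List.prod_append, map_mul]
      simp only [List.map_cons, List.map_nil, List.prod_cons, List.prod_nil, mul_one]
      have : (θ ^ n : MulAut G) * MulAut.conj s = MulAut.conj ((θ ^ n) s) * θ ^ n :=
        aut_mul_conj _ _
      rw [pow_succ]
      calc MulAut.conj (((List.range n).map fun i => (θ ^ i) s).prod) * θ ^ n *
            (MulAut.conj s * θ)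
          = MulAut.conj (((List.range n).map fun i => (θ ^ i) s).prod) *
            (θ ^ n * MulAut.conj s) * θ := by group
        _ = _ := by rw [this]; group


/-- Let `G` be a group with centre `Z`, `m ≥ 1`, and `θ` an automorphism
of `G` with `θ^m = id`.  Let `S_θ = {s ∈ G : s·θ(s)·…·θ^{m-1}(s) ∈ Z}`, with `s ≈ s'` iff
`s' = z·g⁻¹·s·θ(g)` for some `z ∈ Z`, `g ∈ G`; and let
`A = {φ ∈ Aut(G) : φ^m = id, φ∘θ⁻¹ inner}`, with `φ ~ φ'` iff `φ' = Int_g ∘ φ ∘ Int_g⁻¹`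
for some `g ∈ G`.  Then `s ↦ Int_s ∘ θ` maps `S_θ` into `A` and induces a well-defined
bijection `S_θ/≈ → A/~`; this is expressed by: (1) the map sends `S_θ` into `A`,
(2) for `s, s' ∈ S_θ`, `s ≈ s'` iff `Int_s∘θ ~ Int_{s'}∘θ` (well-definedness and
injectivity on the quotients), and (3) every `φ ∈ A` is equivalent to `Int_s∘θ` for
some `s ∈ S_θ` (surjectivity on the quotients). -/
theorem stmt5 {G : Type*} [Group G] (m : ℕ) (hm : 1 ≤ m)
    (θ : MulAut G) (hord : θ ^ m = 1)
    (S : Set G)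
    (hS : S = {s : G | ((List.range m).map (fun i => (θ ^ i) s)).prod ∈ Subgroup.center G})
    (A : Set (MulAut G))
    (hA : A = {φ : MulAut G | φ ^ m = 1 ∧ φ * θ⁻¹ ∈ (MulAut.conj : G →* MulAut G).range})
    (Req : G → G → Prop)
    (hReq : ∀ s s' : G, (Req s s' ↔ ∃ z ∈ Subgroup.center G, ∃ g : G, s' = z * (g⁻¹ * s * θ g)))
    (Aeq : MulAut G → MulAut G → Prop)
    (hAeq : ∀ φ φ' : MulAut G,
      (Aeq φ φ' ↔ ∃ g : G, φ' = MulAut.conj g * φ * (MulAut.conj g)⁻¹)) :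
    (∀ s ∈ S, MulAut.conj s * θ ∈ A) ∧
    (∀ s ∈ S, ∀ s' ∈ S, (Req s s' ↔ Aeq (MulAut.conj s * θ) (MulAut.conj s' * θ))) ∧
    (∀ φ ∈ A, ∃ s ∈ S, Aeq (MulAut.conj s * θ) φ) := by
  subst hS hA
  refine ⟨?_, ?_, ?_⟩
  · intro s hs
    refine ⟨?_, ⟨s, ?_⟩⟩
    · rw [pow_conj_mul, hord, mul_one, (conj_eq_one_iff' _).2 hs]
    · group
  · intro s _hs s' _hs'
    rw [hReq, hAeq]
    constructor
    · rintro ⟨z, hz, g, rfl⟩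
      refine ⟨g⁻¹, ?_⟩
      rw [map_mul, map_mul, map_mul, (conj_eq_one_iff' z).2 hz, one_mul,
        mul_assoc, ← aut_mul_conj θ g, map_inv]
      group
    · rintro ⟨g, hg⟩
      have h3 : MulAut.conj (g * s * θ g⁻¹) * θ = MulAut.conj s' * θ := by
        rw [hg, map_mul, map_mul, mul_assoc, ← aut_mul_conj θ g⁻¹, map_inv]
        group
      have h4 : MulAut.conj s' = MulAut.conj (g * s * θ g⁻¹) := (mul_right_cancel h3).symm
      refine ⟨s' * (g * s * θ g⁻¹)⁻¹, ?_, g⁻¹, ?_⟩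
      · rw [← conj_eq_one_iff', map_mul, map_inv, ← h4]
        simp
      · group
  · intro φ hφ
    obtain ⟨h1, s, hs2⟩ := hφ
    have hφeq : MulAut.conj s * θ = φ := by rw [hs2]; group
    have h5 : MulAut.conj (((List.range m).map (fun i => (θ ^ i) s)).prod) * θ ^ m = 1 := by
      rw [← pow_conj_mul, hφeq, h1]
    rw [hord, mul_one] at h5
    refine ⟨s, (conj_eq_one_iff' _).1 h5, ?_⟩
    rw [hAeq]
    exact ⟨1, by rw [hφeq, map_one]; group⟩
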